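/- arXiv:2104.10734 — 2 statements merged into one kernel-verified Lean document; each statement's English description precedes it below -/
import Mathlib

section
/- If a digraph D has the property that between any two vertices there is a unique oriented simple path, then no two distinct simple oriented cycles of D share an edge. -/
/-!
A simple cycle through the edge `(a, b)`, rotated so that it starts at `b`, is a simple path
from `b` to `a`. Two simple cycles through `(a, b)` thus give the same path, so they are rotations
of each other and traverse the same edges.
-/

/-- The list of directed edges traversed by the cyclic sequence of vertices `l`
(consecutive pairs, including the closing pair from the last to the first vertex). -/
def cyclicPairs {V : Type*} (l : List V) : List (V × V) := l.zip (l.rotate 1)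

/-- `l` is an Eulerian tour of the digraph with edge set `E`: the cyclically consecutive
pairs of `l` are pairwise distinct and are exactly the edges of `E`. -/
def IsEulerTour {V : Type*} [DecidableEq V] (E : Finset (V × V)) (l : List V) : Prop :=
  l ≠ [] ∧ (cyclicPairs l).Nodup ∧ (cyclicPairs l).toFinset = E

/-- The digraph with edge set `E` has exactly one Eulerian tour up to cyclic shift. -/
def UniqueEulerTour {V : Type*} [DecidableEq V] (E : Finset (V × V)) : Prop :=
  ∃ l, IsEulerTour E l ∧ ∀ l', IsEulerTour E l' → l'.IsRotated l

def Loopless {V : Type*} (E : Finset (V × V)) : Prop := ∀ e ∈ E, e.1 ≠ e.2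

def NoIsolated {V : Type*} (E : Finset (V × V)) : Prop :=
  ∀ v : V, ∃ e ∈ E, e.1 = v ∨ e.2 = v

def outdeg {V : Type*} [DecidableEq V] (E : Finset (V × V)) (v : V) : ℕ :=
  (E.filter (fun p => p.1 = v)).card

def indeg {V : Type*} [DecidableEq V] (E : Finset (V × V)) (v : V) : ℕ :=
  (E.filter (fun p => p.2 = v)).card

/-- `l` is an oriented simple path from `u` to `v` using edges of `E`. -/
def IsPathIn {V : Type*} (E : Finset (V × V)) (u v : V) (l : List V) : Prop :=
  l.Chain' (fun a b => (a, b) ∈ E) ∧ l.head? = some u ∧ l.getLast? = some v ∧ l.Nodup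

/-- `l` (read cyclically) is a simple oriented cycle of the digraph `E`. -/
def IsSimpleCycleList {V : Type*} (E : Finset (V × V)) (l : List V) : Prop :=
  l ≠ [] ∧ l.Nodup ∧ ∀ p ∈ cyclicPairs l, p ∈ E

theorem List.exists_rotate_eq_cons {α : Type*} {l : List α} {a : α} (h : a ∈ l) :
    ∃ n t, l.rotate n = a :: t := by
  obtain ⟨s, t, rfl⟩ := List.append_of_mem h
  exact ⟨s.length, t ++ s, List.rotate_append_length_eq s (a :: t)⟩

section cyclicPairs

variable {V : Type*}

theorem cyclicPairs_cons (a : V) (t : List V) :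
    cyclicPairs (a :: t) = (a :: t).zip (t ++ [a]) := by
  simp [cyclicPairs]

theorem cyclicPairs_rotate (l : List V) (n : ℕ) :
    cyclicPairs (l.rotate n) = (cyclicPairs l).rotate n := by
  rw [cyclicPairs, cyclicPairs, List.zip, List.zipWith_rotate_distrib _ _ _ _ (by simp),
    List.rotate_rotate, List.rotate_rotate, Nat.add_comm]

theorem mem_cyclicPairs_rotate {l : List V} {p : V × V} (n : ℕ) :
    p ∈ cyclicPairs (l.rotate n) ↔ p ∈ cyclicPairs l := by
  rw [cyclicPairs_rotate, List.mem_rotate]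

theorem isChain_of_forall_mem_cyclicPairs {R : V → V → Prop} {l : List V}
    (h : ∀ p ∈ cyclicPairs l, R p.1 p.2) : l.IsChain R := by
  cases l with
  | nil => exact List.IsChain.nil
  | cons a t =>
    have hclosed : (a :: t ++ [a]).IsChain R := by
      rw [List.isChain_cons_append_singleton_iff_forall₂, List.forall₂_iff_zip]
      exact ⟨by simp, fun hp => h _ (cyclicPairs_cons a t ▸ hp)⟩
    exact hclosed.left_of_append

theorem exists_rotate_head?_getLast?_of_mem_cyclicPairs {l : List V} {a b : V}
    (h : (a, b) ∈ cyclicPairs l) :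
    ∃ n, (l.rotate n).head? = some b ∧ (l.rotate n).getLast? = some a := by
  obtain ⟨n, ps, hn⟩ := List.exists_rotate_eq_cons h
  rw [← cyclicPairs_rotate] at hn
  cases hl : l.rotate n with
  | nil => simp [hl, cyclicPairs] at hn
  | cons a' t =>
    obtain ⟨c, s, hcs⟩ := List.exists_cons_of_ne_nil (List.concat_ne_nil a' t)
    rw [hl, cyclicPairs_cons, hcs, List.zip_cons_cons, List.cons.injEq, Prod.mk.injEq] at hn
    obtain ⟨⟨rfl, rfl⟩, -⟩ := hn
    have hrot : l.rotate (n + 1) = t ++ [a'] := by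
      rw [← List.rotate_rotate, hl, List.rotate_cons_succ, List.rotate_zero]
    exact ⟨n + 1, by simp [hrot, hcs], by simp [hrot]⟩

end cyclicPairs

theorem IsSimpleCycleList.exists_isPathIn_rotate {V : Type*} {E : Finset (V × V)} {c : List V}
    (hc : IsSimpleCycleList E c) {a b : V} (hab : (a, b) ∈ cyclicPairs c) :
    ∃ n, IsPathIn E b a (c.rotate n) := by
  obtain ⟨n, hhead, hlast⟩ := exists_rotate_head?_getLast?_of_mem_cyclicPairs hab
  refine ⟨n, isChain_of_forall_mem_cyclicPairs fun p hp => ?_, hhead, hlast,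
    List.nodup_rotate.2 hc.2.1⟩
  exact hc.2.2 p ((mem_cyclicPairs_rotate n).1 hp)

/-- If between any two vertices there is a unique oriented simple path, then two simple
oriented cycles sharing an edge have the same edge set (no two distinct cycles share an
edge). -/
theorem unique_path_cycles_edge_disjoint {V : Type*} [DecidableEq V]
    (E : Finset (V × V))
    (hpath : ∀ u v : V, ∃! l : List V, IsPathIn E u v l)
    (c₁ c₂ : List V) (h₁ : IsSimpleCycleList E c₁) (h₂ : IsSimpleCycleList E c₂)
    (e : V × V) (he₁ : e ∈ cyclicPairs c₁) (he₂ : e ∈ cyclicPairs c₂) :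
    (cyclicPairs c₁).toFinset = (cyclicPairs c₂).toFinset := by
  obtain ⟨a, b⟩ := e
  obtain ⟨n₁, hp₁⟩ := h₁.exists_isPathIn_rotate he₁
  obtain ⟨n₂, hp₂⟩ := h₂.exists_isPathIn_rotate he₂
  have hrot : c₁.rotate n₁ = c₂.rotate n₂ := (hpath b a).unique hp₁ hp₂
  ext p
  rw [List.mem_toFinset, List.mem_toFinset, ← mem_cyclicPairs_rotate n₁, hrot,
    mem_cyclicPairs_rotate]
end

section
/- If a digraph D has an Eulerian tour that visits each vertex exactly twice, and this tour contains the pattern i →(walk a) j →(walk b) i →(walk c) j →(walk d) i with i ≠ j, then D has at least two distinct Eulerian tours up to cyclic shift (namely also i →a j →d i →c j →b i). Consequently, in a digraph with a unique Eulerian tour in which every vertex is visited exactly twice, the visit pattern of any two vertices is non-interlaced. -/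
/-! The edge list of the tour splits into the four walks `i a j`, `j b i`, `i c j`, `j d i`;
swapping `b` and `d` only permutes these blocks, so the new list is again an Eulerian tour.
Since `i` occurs exactly twice, the only rotations of the new tour starting at `i` are the tour
itself and `i c j b i a j d`. Equality with the old tour would force `b = d` or `a = c`, and then
a block of edges would be traversed twice. -/

section

variable {V : Type*}

open List

def walkPairs (x : V) (s : List V) (y : V) : List (V × V) := (x :: s).zip (s ++ [y])

lemma walkPairs_ne_nil (x : V) (s : List V) (y : V) : walkPairs x s y ≠ [] := by
  cases s <;> simp [walkPairs]

lemma walkPairs_append_cons (x : V) (s : List V) (y : V) (t : List V) (z : V) :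
    walkPairs x (s ++ y :: t) z = walkPairs x s y ++ walkPairs y t z := by
  simpa [walkPairs] using
    zip_append (l₁ := x :: s) (r₁ := y :: t) (l₂ := s ++ [y]) (r₂ := t ++ [z]) (by simp)

lemma cyclicPairs_cons_s19 (x : V) (s : List V) : cyclicPairs (x :: s) = walkPairs x s x := by
  simp [cyclicPairs, walkPairs, rotate_cons_succ]

lemma cyclicPairs_interlaced (i j : V) (a b c d : List V) :
    cyclicPairs (i :: a ++ j :: b ++ i :: c ++ j :: d) =
      walkPairs i a j ++ walkPairs j b i ++ walkPairs i c j ++ walkPairs j d i := by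
  simp only [cons_append, append_assoc, cyclicPairs_cons_s19, walkPairs_append_cons]

lemma cyclicPairs_swap_perm (i j : V) (a b c d : List V) :
    cyclicPairs (i :: a ++ j :: d ++ i :: c ++ j :: b) ~
      cyclicPairs (i :: a ++ j :: b ++ i :: c ++ j :: d) := by
  classical
  simp only [cyclicPairs_interlaced, perm_iff_count, count_append]
  intro _
  omega

lemma IsEulerTour.of_cyclicPairs_perm [DecidableEq V] {E : Finset (V × V)} {l l' : List V}
    (h : IsEulerTour E l) (hne : l' ≠ []) (hp : cyclicPairs l' ~ cyclicPairs l) :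
    IsEulerTour E l' :=
  ⟨hne, hp.nodup_iff.2 h.2.1, (toFinset_eq_of_perm _ _ hp).trans h.2.2⟩

lemma List.notMem_of_count_cons_append_cons_eq_two [DecidableEq V] {x : V} {s t : List V}
    (h : (x :: s ++ x :: t).count x = 2) : x ∉ s ∧ x ∉ t := by
  simp only [cons_append, count_cons_self, count_append] at h
  exact ⟨count_eq_zero.1 (by omega), count_eq_zero.1 (by omega)⟩

lemma List.eq_and_eq_of_cons_append_cons_eq {x : V} {s t s' t' : List V} (hs : x ∉ s)
    (ht : x ∉ t) (h : x :: s ++ x :: t = x :: s' ++ x :: t') : s = s' ∧ t = t' := by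
  simp only [cons_append, cons.injEq, true_and] at h
  obtain ⟨hs', -, ht'⟩ := (append_cons_inj_of_notMem hs ht).1 h
  exact ⟨hs', ht'⟩

lemma List.IsRotated.eq_or_eq_of_cons_append_cons {x : V} {s t r : List V} (hs : x ∉ s)
    (ht : x ∉ t) (h : (x :: s ++ x :: t) ~r (x :: r)) :
    x :: r = x :: s ++ x :: t ∨ x :: r = x :: t ++ x :: s := by
  obtain ⟨n, hn, hrot⟩ := isRotated_iff_mod.1 h
  rw [rotate_eq_drop_append_take hn] at hrot
  obtain ⟨u, w, huw, hwu⟩ : ∃ u w, u ++ w = x :: s ++ x :: t ∧ w ++ u = x :: r :=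
    ⟨_, _, take_append_drop n _, hrot⟩
  rcases w with _ | ⟨y, w⟩
  · left; simpa [← huw] using hwu.symm
  rcases u with _ | ⟨z, u⟩
  · left; simpa [← huw] using hwu.symm
  obtain ⟨rfl, -⟩ := cons_eq_cons.1 hwu
  simp only [cons_append, cons.injEq] at huw
  obtain ⟨rfl, hu⟩ := huw
  obtain ⟨rfl, -, rfl⟩ := (append_cons_inj_of_notMem hs ht).1 hu.symm
  right; simp [← hwu]

lemma List.not_nodup_of_append_self_sublist {α : Type*} {m l : List α} (hm : m ≠ [])
    (h : m ++ m <+ l) : ¬ l.Nodup := by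
  intro hl
  obtain ⟨x, hx⟩ := exists_mem_of_ne_nil m hm
  exact (nodup_append.1 (hl.sublist h)).2.2 x hx x hx rfl

end

/-- If an Eulerian tour visiting every vertex exactly twice contains the interlaced
pattern `i →a j →b i →c j →d i` with `i ≠ j`, then swapping the walks `b` and `d`
produces a second, genuinely different Eulerian tour. Consequently, in a digraph with a
unique Eulerian tour visiting every vertex exactly twice, no two vertices are
interlaced. -/
theorem interlaced_gives_second_tour {V : Type*} [DecidableEq V]
    (E : Finset (V × V)) (i j : V) (hij : i ≠ j) (a b c d : List V)
    (h : IsEulerTour E (i :: a ++ j :: b ++ i :: c ++ j :: d))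
    (htwice : ∀ v ∈ (i :: a ++ j :: b ++ i :: c ++ j :: d),
      (i :: a ++ j :: b ++ i :: c ++ j :: d).count v = 2) :
    IsEulerTour E (i :: a ++ j :: d ++ i :: c ++ j :: b) ∧
      ¬ (i :: a ++ j :: d ++ i :: c ++ j :: b).IsRotated
          (i :: a ++ j :: b ++ i :: c ++ j :: d) := by
  have hT : i :: a ++ j :: b ++ i :: c ++ j :: d = i :: (a ++ j :: b) ++ i :: (c ++ j :: d) := by
    simp
  have hT' : i :: a ++ j :: d ++ i :: c ++ j :: b = i :: (a ++ j :: d) ++ i :: (c ++ j :: b) := by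
    simp
  obtain ⟨hiab, hicd⟩ :=
    List.notMem_of_count_cons_append_cons_eq_two (hT ▸ htwice i (by simp))
  have hi : i ∉ a ∧ i ∉ b ∧ i ∉ c ∧ i ∉ d := by simp_all
  refine ⟨h.of_cyclicPairs_perm (by simp) (cyclicPairs_swap_perm i j a b c d), fun hrot => ?_⟩
  have hnodup := h.2.1
  rw [cyclicPairs_interlaced] at hnodup
  rw [hT, hT'] at hrot
  rcases hrot.eq_or_eq_of_cons_append_cons (by simp [hi, hij]) (by simp [hi, hij]) with heq | heq
  · have hbd : b = d := by simpa using (List.eq_and_eq_of_cons_append_cons_eq hiab hicd heq).1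
    subst hbd
    exact List.not_nodup_of_append_self_sublist (walkPairs_ne_nil j b i) (by simp) hnodup
  · have hac : a = c :=
      List.append_cancel_right (List.eq_and_eq_of_cons_append_cons_eq hiab hicd heq).1
    subst hac
    exact List.not_nodup_of_append_self_sublist (walkPairs_ne_nil i a j) (by simp) hnodup
end
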